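/- Let p be a probability distribution on a finite set S, O : S → Δ(X) a stochastic observation kernel with all entries strictly positive, and q(x) = Σ_s p(s) O(x|s) the induced observation distribution. Then H(q) ≤ H(p) + log(max_{s,x} 1/O(x|s)). That is, the observation entropy exceeds the state entropy by at most the logarithm of the largest entry of the Hadamard (entrywise) inverse of O. -/

import Mathlib

noncomputable def shannonEntropy {X : Type*} [Fintype X] (p : X → ℝ) : ℝ :=
  -∑ x, p x * Real.log (p x)

/-!
Couple state and observation: the joint law `p s * O s x` has entropy
`H(p) + Σ_s p s * H(O s)`, and it dominates the entropy of its marginal `q` because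
`t ↦ -t log t` is subadditive on `[0, ∞)`. With `M` the largest entry of `1 / O`, each row
`O s` has all entries at least `1 / M`, so its entropy is at most `log M`.
-/

open Finset Real

lemma Real.mul_log_le_mul_log_of_le {a b : ℝ} (ha : 0 ≤ a) (hab : a ≤ b) :
    a * log a ≤ a * log b := by
  rcases ha.eq_or_lt with rfl | ha
  · simp
  · exact mul_le_mul_of_nonneg_left (log_le_log ha hab) ha.le

lemma Real.negMulLog_sum_le {ι : Type*} (s : Finset ι) (f : ι → ℝ) (hf : ∀ i ∈ s, 0 ≤ f i) :
    negMulLog (∑ i ∈ s, f i) ≤ ∑ i ∈ s, negMulLog (f i) := by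
  calc negMulLog (∑ i ∈ s, f i) = ∑ i ∈ s, -(f i * log (∑ j ∈ s, f j)) := by
        simp only [negMulLog, neg_mul, sum_mul, sum_neg_distrib]
    _ ≤ ∑ i ∈ s, negMulLog (f i) := sum_le_sum fun i hi => by
        rw [negMulLog, neg_mul, neg_le_neg_iff]
        exact mul_log_le_mul_log_of_le (hf i hi) (single_le_sum hf hi)

lemma shannonEntropy_eq_sum_negMulLog {X : Type*} [Fintype X] (p : X → ℝ) :
    shannonEntropy p = ∑ x, negMulLog (p x) := by
  simp only [shannonEntropy, negMulLog_eq_neg, sum_neg_distrib]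

lemma shannonEntropy_le_log_of_one_div_le {X : Type*} [Fintype X] (r : X → ℝ)
    (hr0 : ∀ x, 0 < r x) (hr1 : ∑ x, r x = 1) {M : ℝ} (hM : ∀ x, 1 / r x ≤ M) :
    shannonEntropy r ≤ log M := by
  calc shannonEntropy r = ∑ x, r x * log (1 / r x) := by
        simp only [shannonEntropy, one_div, log_inv, mul_neg, sum_neg_distrib]
    _ ≤ ∑ x, r x * log M := by
        gcongr with x
        · exact (hr0 x).le
        · exact one_div_pos.2 (hr0 x)
        · exact hM x
    _ = log M := by rw [← sum_mul, hr1, one_mul]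

lemma shannonEntropy_sum_le_shannonEntropy_uncurry {S X : Type*} [Fintype S] [Fintype X]
    (f : S → X → ℝ) (hf : ∀ s x, 0 ≤ f s x) :
    shannonEntropy (fun x => ∑ s, f s x) ≤ shannonEntropy (fun sx : S × X => f sx.1 sx.2) := by
  rw [shannonEntropy_eq_sum_negMulLog, shannonEntropy_eq_sum_negMulLog, Fintype.sum_prod_type,
    sum_comm]
  exact sum_le_sum fun x _ => negMulLog_sum_le _ _ fun s _ => hf s x

lemma shannonEntropy_mul_kernel {S X : Type*} [Fintype S] [Fintype X] (p : S → ℝ)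
    (O : S → X → ℝ) (hO1 : ∀ s, ∑ x, O s x = 1) :
    shannonEntropy (fun sx : S × X => p sx.1 * O sx.1 sx.2) =
      shannonEntropy p + ∑ s, p s * shannonEntropy (O s) := by
  simp only [shannonEntropy_eq_sum_negMulLog, Fintype.sum_prod_type, negMulLog_mul, sum_add_distrib,
    ← sum_mul, ← mul_sum, hO1, one_mul]

theorem entropy_obs_le_entropy_state_add_log_maxInv {S X : Type*}
    [Fintype S] [Fintype X] [Nonempty S] [Nonempty X]
    (p : S → ℝ) (hp0 : ∀ s, 0 ≤ p s) (hp1 : ∑ s, p s = 1)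
    (O : S → X → ℝ) (hO0 : ∀ s x, 0 < O s x) (hO1 : ∀ s, ∑ x, O s x = 1)
    (q : X → ℝ) (hq : ∀ x, q x = ∑ s, p s * O s x) :
    shannonEntropy q ≤ shannonEntropy p +
      Real.log ((Finset.univ (α := S × X)).sup' Finset.univ_nonempty
        (fun sx => 1 / O sx.1 sx.2)) := by
  set M := (Finset.univ (α := S × X)).sup' Finset.univ_nonempty (fun sx => 1 / O sx.1 sx.2)
  have hM : ∀ s x, 1 / O s x ≤ M := fun s x =>
    le_sup' (fun sx : S × X => 1 / O sx.1 sx.2) (mem_univ (s, x))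
  calc shannonEntropy q = shannonEntropy (fun x => ∑ s, p s * O s x) := by
        rw [funext hq]
    _ ≤ shannonEntropy (fun sx : S × X => p sx.1 * O sx.1 sx.2) :=
        shannonEntropy_sum_le_shannonEntropy_uncurry _ fun s x => mul_nonneg (hp0 s) (hO0 s x).le
    _ = shannonEntropy p + ∑ s, p s * shannonEntropy (O s) := shannonEntropy_mul_kernel p O hO1
    _ ≤ shannonEntropy p + ∑ s, p s * log M := by
        gcongr with s
        · exact hp0 s
        · exact shannonEntropy_le_log_of_one_div_le (O s) (hO0 s) (hO1 s) (hM s)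
    _ = shannonEntropy p + log M := by rw [← sum_mul, hp1, one_mul]
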